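/- Let G ≤ PL₊(I) and suppose (A₁,g₁), …, (A_q,g_q) are factor signed orbitals associated to elements of G with A₁ = A₂ = ⋯ = A_q. Then for any integers p₁, …, p_q, every one-bump factor of the element g₁^{p₁} ⋯ g_q^{p_q} is also a one-bump factor of some element of G. -/

import Mathlib

/-!
Choose `fᵢ ∈ G` having `gᵢ` as its one-bump factor on `(a, b)`. Each `fᵢ` permutes `[a, b]` and
agrees with `gᵢ` there, and each `gᵢ` is the identity off `(a, b)`. Both properties survive
products and integer powers, so `f = ∏ fᵢ ^ pᵢ ∈ G` agrees on `[a, b]` with `h = ∏ gᵢ ^ pᵢ`, which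
is the identity off `(a, b)`. Hence every orbital of `h` lies in `[a, b]` and is an orbital of `f`
on which `f` and `h` coincide, so the one-bump factors of `h` are one-bump factors of `f`.
-/

open Set

namespace PLPaper

/-- We model `PL₊(I)` inside the group of bijections of `ℝ` with *opposite*
composition, so that the group acts on `ℝ` on the right:
`x · (g * h) = (x · g) · h`. -/
abbrev PermR : Type := (Equiv.Perm ℝ)ᵐᵒᵖ

/-- The (right) action of `g` on the point `x`. -/
def ap (g : PermR) (x : ℝ) : ℝ := g.unop x

/-- `g` is affine on a neighbourhood of `x`. -/
def IsLocallyAffineAt (g : PermR) (x : ℝ) : Prop :=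
  ∃ m b : ℝ, ∀ᶠ y in nhds x, ap g y = m * y + b

/-- The breakpoints of `g`: points of `(0,1)` where `g` is not locally affine
(equivalently, for a PL map, where the derivative fails to exist). -/
def Breakpoints (g : PermR) : Set ℝ :=
  {x ∈ Ioo (0:ℝ) 1 | ¬ IsLocallyAffineAt g x}

/-- `g` is an orientation-preserving piecewise-linear homeomorphism of `[0,1]`
(extended by the identity to all of `ℝ`), with finitely many breakpoints. -/
def IsPL (g : PermR) : Prop :=
  StrictMono (ap g) ∧ (∀ x ∉ Ioo (0:ℝ) 1, ap g x = x) ∧ (Breakpoints g).Finite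

/-- The support of `g`. -/
def Supp (g : PermR) : Set ℝ := {x | ap g x ≠ x}

/-- `(a,b)` is an orbital of `g`, i.e. a connected component of `Supp g`. -/
def IsOrbital (g : PermR) (a b : ℝ) : Prop :=
  a < b ∧ Ioo a b ⊆ Supp g ∧ a ∉ Supp g ∧ b ∉ Supp g

/-- The support of a subgroup `G`. -/
def GSupp (G : Subgroup PermR) : Set ℝ := ⋃ g ∈ (G : Set PermR), Supp g

/-- `(a,b)` is an orbital of the group `G`, i.e. a connected component of its support. -/
def IsGroupOrbital (G : Subgroup PermR) (a b : ℝ) : Prop :=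
  a < b ∧ Ioo a b ⊆ GSupp G ∧ a ∉ GSupp G ∧ b ∉ GSupp G

/-- The pair `g, h` carries a transition chain: orbitals `(a,b)` of `g` and
`(c,d)` of `h` with `a < c < b < d`. -/
def ElemsTransitionChain (g h : PermR) : Prop :=
  ∃ a b c d : ℝ, IsOrbital g a b ∧ IsOrbital h c d ∧ a < c ∧ c < b ∧ b < d

/-- The pair `g, h` carries a one-sided overlap: orbitals `(a,b)` of `g` and
`(a,c)` of `h`, or `(a,b)` of `g` and `(c,b)` of `h`, where `a < c < b`. -/
def ElemsOneSidedOverlap (g h : PermR) : Prop :=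
  ∃ a b c : ℝ, a < c ∧ c < b ∧
    ((IsOrbital g a b ∧ IsOrbital h a c) ∨ (IsOrbital g a b ∧ IsOrbital h c b))

def AdmitsTransitionChain (G : Subgroup PermR) : Prop :=
  ∃ g ∈ G, ∃ h ∈ G, ElemsTransitionChain g h

def AdmitsOneSidedOverlap (G : Subgroup PermR) : Prop :=
  ∃ g ∈ G, ∃ h ∈ G, ElemsOneSidedOverlap g h

/-- `G` admits a bad overlap: orbitals `A` of `f ∈ G` and `B` of `g ∈ G` which
intersect, are distinct, and neither closure is contained in the other orbital. -/
def AdmitsBadOverlap (G : Subgroup PermR) : Prop :=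
  ∃ f ∈ G, ∃ g ∈ G, ∃ a b c d : ℝ, IsOrbital f a b ∧ IsOrbital g c d ∧
    (Ioo a b ∩ Ioo c d).Nonempty ∧ Ioo a b ≠ Ioo c d ∧
    ¬ Icc a b ⊆ Ioo c d ∧ ¬ Icc c d ⊆ Ioo a b

/-- A tower: a set of signed orbitals `((a,b), g)` with pairwise nested orbitals,
where equal orbitals force equal signatures. -/
def IsTower (T : Set ((ℝ × ℝ) × PermR)) : Prop :=
  (∀ p ∈ T, IsOrbital p.2 p.1.1 p.1.2) ∧
  (∀ p ∈ T, ∀ q ∈ T,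
      Ioo p.1.1 p.1.2 ⊆ Ioo q.1.1 q.1.2 ∨ Ioo q.1.1 q.1.2 ⊆ Ioo p.1.1 p.1.2) ∧
  (∀ p ∈ T, ∀ q ∈ T, p.1 = q.1 → p.2 = q.2)

/-- `G` admits the tower `T` if `T` is a tower all of whose signatures lie in `G`. -/
def AdmitsTower (G : Subgroup PermR) (T : Set ((ℝ × ℝ) × PermR)) : Prop :=
  IsTower T ∧ ∀ p ∈ T, p.2 ∈ G

def AdmitsInfiniteTower (G : Subgroup PermR) : Prop :=
  ∃ T : Set ((ℝ × ℝ) × PermR), AdmitsTower G T ∧ T.Infinite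

/-- The set of breakpoints of the elements of a set `S`. -/
def BreakSet (S : Set PermR) : Set ℝ := ⋃ g ∈ S, Breakpoints g

/-- The derived length of a group: the least `n` with `derivedSeries G n = ⊥`. -/
noncomputable def derivedLength (G : Type*) [Group G] : ℕ :=
  sInf {n : ℕ | derivedSeries G n = ⊥}

/-- `g` is the one-bump factor of `f` over the orbital `(a,b)` of `f`:
`g` agrees with `f` on `(a,b)` and is the identity elsewhere. -/
def IsOneBumpFactor (g f : PermR) (a b : ℝ) : Prop :=
  IsOrbital f a b ∧ (∀ x ∈ Ioo a b, ap g x = ap f x) ∧ (∀ x ∉ Ioo a b, ap g x = x)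

/-- `g` is a one-bump factor of `f`. -/
def IsFactorOf (g f : PermR) : Prop := ∃ a b : ℝ, IsOneBumpFactor g f a b

/-- `((a,b), g)` is a factor signed orbital associated to (an element of) `G`. -/
def AssociatedFactor (G : Subgroup PermR) (a b : ℝ) (g : PermR) : Prop :=
  ∃ f ∈ G, IsOneBumpFactor g f a b

/-- The split group `S(G)`: the subgroup generated by the one-bump factors of
all elements of `G`. -/
def SplitGroup (G : Subgroup PermR) : Subgroup PermR :=
  Subgroup.closure {g : PermR | ∃ f ∈ G, IsFactorOf g f}

end PLPaper

theorem Subgroup.prod_ofFn_zpow_mem {H : Type*} [Group H] (K : Subgroup (H × H)) {q : ℕ}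
    (f g : Fin q → H) (p : Fin q → ℤ) (hfg : ∀ i, (f i, g i) ∈ K) :
    ((List.ofFn fun i => f i ^ p i).prod, (List.ofFn fun i => g i ^ p i).prod) ∈ K := by
  set l := List.ofFn fun i => (f i, g i) ^ p i
  convert K.list_prod_mem (l := l) ?_ using 1
  · ext
    · simpa [l, List.map_ofFn, Function.comp_def] using (map_list_prod (MonoidHom.fst H H) l).symm
    · simpa [l, List.map_ofFn, Function.comp_def] using (map_list_prod (MonoidHom.snd H H) l).symm
  · simpa [l, List.mem_ofFn] using fun i => K.zpow_mem (hfg i) (p i)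

namespace PLPaper

@[simp]
theorem ap_one : ap 1 = id := rfl

theorem ap_mul (f g : PermR) : ap (f * g) = ap g ∘ ap f := rfl

@[simp]
theorem ap_inv_ap (f : PermR) (x : ℝ) : ap f⁻¹ (ap f x) = x := f.unop.symm_apply_apply x

theorem mem_Supp {f : PermR} {x : ℝ} : x ∈ Supp f ↔ ap f x ≠ x := Iff.rfl

def eqOnSubgroup (S : Set ℝ) : Subgroup (PermR × PermR) where
  carrier := {fg | ap fg.1 '' S = S ∧ EqOn (ap fg.1) (ap fg.2) S}
  one_mem' := ⟨image_id S, fun _ _ => rfl⟩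
  mul_mem' := by
    rintro u v ⟨hu, hu'⟩ ⟨hv, hv'⟩
    refine ⟨by rw [Prod.fst_mul, ap_mul, image_comp, hu, hv], fun x hx => ?_⟩
    have hux : ap u.1 x ∈ S := hu ▸ mem_image_of_mem _ hx
    simp only [Prod.fst_mul, Prod.snd_mul, ap_mul, Function.comp_apply]
    rw [hv' hux, hu' hx]
  inv_mem' := by
    intro u ⟨hu, hu'⟩
    refine ⟨?_, ?_⟩
    · conv_lhs => rw [← hu]
      simp [← image_comp]
    · intro y hy
      rw [← hu] at hy
      obtain ⟨x, hx, rfl⟩ := hy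
      rw [Prod.fst_inv, Prod.snd_inv, ap_inv_ap, hu' hx, ap_inv_ap]

theorem ap_image_eq_of_fixed {g : PermR} {T U : Set ℝ} (hfix : ∀ x ∉ T, ap g x = x)
    (hTU : T ⊆ U) : ap g '' U = U := by
  have hcompl : ap g '' Tᶜ = Tᶜ := EqOn.image_eq_self fun x hx => hfix x hx
  have hT : ap g '' T = T := by
    rw [← compl_compl T, image_compl_eq (f := ap g) g.unop.bijective, hcompl]
  rw [← union_sdiff_cancel hTU, image_union, hT,
    EqOn.image_eq_self fun x hx => hfix x hx.2]

theorem IsOneBumpFactor.mem_eqOnSubgroup_Icc {g f : PermR} {a b : ℝ}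
    (h : IsOneBumpFactor g f a b) : (f, g) ∈ eqOnSubgroup (Icc a b) := by
  obtain ⟨⟨-, -, ha, hb⟩, hagree, hfix⟩ := h
  have heq : EqOn (ap f) (ap g) (Icc a b) := by
    intro x hx
    rcases eq_endpoints_or_mem_Ioo_of_mem_Icc hx with rfl | rfl | hx
    · rw [not_not.mp ha, hfix x (lt_irrefl x ∘ And.left)]
    · rw [not_not.mp hb, hfix x (lt_irrefl x ∘ And.right)]
    · exact (hagree x hx).symm
  exact ⟨heq.image_eq.trans (ap_image_eq_of_fixed hfix Ioo_subset_Icc_self), heq⟩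

theorem IsOneBumpFactor.one_mem_eqOnSubgroup_compl {g f : PermR} {a b : ℝ}
    (h : IsOneBumpFactor g f a b) : ((1 : PermR), g) ∈ eqOnSubgroup (Ioo a b)ᶜ :=
  ⟨image_id _, fun x hx => (h.2.2 x hx).symm⟩

theorem IsOrbital.Icc_subset_Icc {f : PermR} {a b a' b' : ℝ} (h : IsOrbital f a' b')
    (hsupp : Supp f ⊆ Ioo a b) : Icc a' b' ⊆ Icc a b := by
  obtain ⟨ha, hb⟩ := (Ioo_subset_Ioo_iff h.1).mp (h.2.1.trans hsupp)
  exact Set.Icc_subset_Icc ha hb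

theorem IsOrbital.of_eqOn {f h : PermR} {a b : ℝ} (hh : IsOrbital h a b)
    (heq : EqOn (ap f) (ap h) (Icc a b)) : IsOrbital f a b := by
  obtain ⟨hab, hsupp, ha, hb⟩ := hh
  refine ⟨hab, fun x hx => ?_, ?_, ?_⟩
  · rw [mem_Supp, heq (Ioo_subset_Icc_self hx)]; exact hsupp hx
  · rwa [mem_Supp, heq (left_mem_Icc.mpr hab.le)]
  · rwa [mem_Supp, heq (right_mem_Icc.mpr hab.le)]

theorem IsOneBumpFactor.of_eqOn {c f h : PermR} {a b : ℝ} (hc : IsOneBumpFactor c h a b)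
    (heq : EqOn (ap f) (ap h) (Icc a b)) : IsOneBumpFactor c f a b :=
  ⟨hc.1.of_eqOn heq, fun x hx => (hc.2.1 x hx).trans (heq (Ioo_subset_Icc_self hx)).symm, hc.2.2⟩

theorem statement10_general (G : Subgroup PermR)
    (q : ℕ) (a b : ℝ) (g : Fin q → PermR)
    (hg : ∀ i, AssociatedFactor G a b (g i)) (p : Fin q → ℤ) :
    ∀ c : PermR, IsFactorOf c ((List.ofFn fun i => g i ^ p i).prod) →
      ∃ f ∈ G, IsFactorOf c f := by
  choose f hfG hfactor using hg
  obtain ⟨-, hagree⟩ := (eqOnSubgroup (Icc a b)).prod_ofFn_zpow_mem f g p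
    fun i => (hfactor i).mem_eqOnSubgroup_Icc
  obtain ⟨-, hfix⟩ := (eqOnSubgroup (Ioo a b)ᶜ).prod_ofFn_zpow_mem 1 g p
    fun i => (hfactor i).one_mem_eqOnSubgroup_compl
  have hsupp : Supp (List.ofFn fun i => g i ^ p i).prod ⊆ Ioo a b := by
    intro x hx
    by_contra hx'
    exact hx (by simpa using (hfix hx').symm)
  rintro c ⟨a', b', hc⟩
  refine ⟨_, G.list_prod_mem ?_, a', b', hc.of_eqOn (hagree.mono (hc.1.Icc_subset_Icc hsupp))⟩
  simpa [List.mem_ofFn] using fun i => G.zpow_mem (hfG i) (p i)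

theorem statement10 (G : Subgroup PermR) (hPL : ∀ g ∈ G, IsPL g)
    (q : ℕ) (a b : ℝ) (g : Fin q → PermR)
    (hg : ∀ i, AssociatedFactor G a b (g i)) (p : Fin q → ℤ) :
    ∀ c : PermR, IsFactorOf c ((List.ofFn fun i => g i ^ p i).prod) →
      ∃ f ∈ G, IsFactorOf c f :=
  statement10_general G q a b g hg p

end PLPaper
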